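/- Let g_1, …, g_m : ℝ^n → ℝ be convex, differentiable, and (L_j, p_j)-Hölder smooth with L_j ≥ 0 and p_j ∈ [0,1]. Let λ⋆ ∈ ℝ^m with λ⋆ ≥ 0 componentwise, r ≥ 0, δ > 0, and define L_{δ,r} := Σ_{j=1}^m [((1−p_j)/(1+p_j)) · (m/δ)]^{(1−p_j)/(1+p_j)} · [(λ⋆_j + r) L_j]^{2/(1+p_j)}, with the convention that the bracketed factor equals 1 when p_j = 1; assume L_{δ,r} > 0. Then for every λ ∈ ℝ^m with 0 ≤ λ_j ≤ λ⋆_j + r for all j, and for all x, x̂ ∈ ℝ^n: Σ_{j=1}^m λ_j [g_j(x̂) − g_j(x) − ⟨∇g_j(x), x̂ − x⟩] ≥ (1/(2L_{δ,r})) ‖Σ_{j=1}^m λ_j (∇g_j(x) − ∇g_j(x̂))‖² − δ/2. -/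

import Mathlib

open scoped RealInnerProductSpace BigOperators

/-!
Fix a direction `v`. Convexity of `g_j` at `x` and the Hölder descent lemma at `x̂ + v` bound
the Bregman term `U_j` below by `⟪∇g_j(x) - ∇g_j(x̂), v⟫ - L_j/(1+p_j) ‖v‖^(1+p_j)`.
Weighted AM–GM with weights `(1 ± p_j)/2` trades each Hölder term `λ_j L_j/(1+p_j) ‖v‖^(1+p_j)`
for `c_j/2 ‖v‖² + δ/(2m)`, where `c_j` is the `j`-th summand of `L_{δ,r}`. Summing,
`Σ λ_j U_j ≥ ⟪s, v⟫ - L_{δ,r}/2 ‖v‖² - δ/2` with `s = Σ λ_j (∇g_j(x) - ∇g_j(x̂))`, and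
`v = s / L_{δ,r}` maximises the right-hand side.
-/

section Gradient

variable {F : Type*} [NormedAddCommGroup F] [InnerProductSpace ℝ F] [CompleteSpace F]
  {f : F → ℝ} {G : F → F}

lemma hasDerivAt_comp_add_smul (hf : ∀ y, HasGradientAt f (G y) y) (x v : F) (t : ℝ) :
    HasDerivAt (fun s : ℝ => f (x + s • v)) ⟪G (x + t • v), v⟫ t := by
  have hline : HasDerivAt (fun s : ℝ => x + s • v) v t := by
    simpa using ((hasDerivAt_id t).smul_const v).const_add x
  exact (hasGradientAt_iff_hasFDerivAt.1 (hf _)).comp_hasDerivAt t hline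

lemma ConvexOn.add_inner_gradient_le (hconv : ConvexOn ℝ Set.univ f)
    (hf : ∀ y, HasGradientAt f (G y) y) (x z : F) :
    f x + ⟪G x, z - x⟫ ≤ f z := by
  have hline : ConvexOn ℝ Set.univ (fun s : ℝ => f (x + s • (z - x))) := by
    simpa [Function.comp_def, AffineMap.lineMap_apply, add_comm] using
      hconv.comp_affineMap (AffineMap.lineMap x z : ℝ →ᵃ[ℝ] F)
  have hslope := hline.le_slope_of_hasDerivAt (Set.mem_univ 0) (Set.mem_univ 1) one_pos
    (hasDerivAt_comp_add_smul hf x (z - x) 0)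
  simp only [slope_def_field, zero_smul, add_zero, one_smul, add_sub_cancel, sub_zero,
    div_one] at hslope
  linarith

lemma sub_sub_inner_gradient_le_of_holder {L p : ℝ} (hp0 : 0 ≤ p)
    (hf : ∀ y, HasGradientAt f (G y) y)
    (hHolder : ∀ a b, ‖G a - G b‖ ≤ L * ‖a - b‖ ^ p) (y v : F) :
    f (y + v) - f y - ⟪G y, v⟫ ≤ L / (1 + p) * ‖v‖ ^ (1 + p) := by
  have h1p : 0 < 1 + p := by linarith
  set h : ℝ → ℝ :=
    fun t => f (y + t • v) - t * ⟪G y, v⟫ - L / (1 + p) * t ^ (1 + p) * ‖v‖ ^ (1 + p)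
  have hcont : Continuous h := by
    have hfc : Continuous f := Differentiable.continuous fun w => (hf w).differentiableAt
    unfold h
    fun_prop (disch := exact h1p.le)
  have hderiv : ∀ t ∈ Set.Ioo (0 : ℝ) 1,
      HasDerivAt h (⟪G (y + t • v) - G y, v⟫ - L * t ^ p * ‖v‖ ^ (1 + p)) t := by
    intro t ht
    have hpow : HasDerivAt (fun s : ℝ => s ^ (1 + p)) ((1 + p) * t ^ p) t := by
      simpa using Real.hasDerivAt_rpow_const (p := 1 + p) (Or.inl ht.1.ne')
    refine (((hasDerivAt_comp_add_smul hf y v t).sub ((hasDerivAt_id t).mul_const ⟪G y, v⟫)).sub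
      ((hpow.const_mul (L / (1 + p))).mul_const (‖v‖ ^ (1 + p)))).congr_deriv ?_
    rw [inner_sub_left]
    field_simp
  have hinner_le : ∀ t ∈ Set.Ioo (0 : ℝ) 1,
      ⟪G (y + t • v) - G y, v⟫ ≤ L * t ^ p * ‖v‖ ^ (1 + p) := by
    intro t ht
    calc ⟪G (y + t • v) - G y, v⟫
        ≤ ‖G (y + t • v) - G y‖ * ‖v‖ := real_inner_le_norm _ _
      _ ≤ L * ‖t • v‖ ^ p * ‖v‖ := by
        simpa using mul_le_mul_of_nonneg_right (hHolder (y + t • v) y) (norm_nonneg v)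
      _ = L * t ^ p * ‖v‖ ^ (1 + p) := by
        rw [norm_smul, Real.norm_of_nonneg ht.1.le, Real.mul_rpow ht.1.le (norm_nonneg v),
          Real.rpow_add' (norm_nonneg v) h1p.ne', Real.rpow_one]
        ring
  have hanti : AntitoneOn h (Set.Icc 0 1) := by
    apply antitoneOn_of_deriv_nonpos (convex_Icc 0 1) hcont.continuousOn
    · intro t ht
      rw [interior_Icc] at ht
      exact (hderiv t ht).differentiableAt.differentiableWithinAt
    · intro t ht
      rw [interior_Icc] at ht
      rw [(hderiv t ht).deriv]
      linarith [hinner_le t ht]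
  have h01 := hanti (Set.left_mem_Icc.2 zero_le_one) (Set.right_mem_Icc.2 zero_le_one) zero_le_one
  simp only [h, zero_smul, add_zero, one_smul, zero_mul, Real.zero_rpow h1p.ne', Real.one_rpow,
    mul_zero, mul_one, sub_zero] at h01
  linarith

lemma inner_sub_holder_le_bregman {L p : ℝ} (hconv : ConvexOn ℝ Set.univ f) (hp0 : 0 ≤ p)
    (hf : ∀ y, HasGradientAt f (G y) y)
    (hHolder : ∀ a b, ‖G a - G b‖ ≤ L * ‖a - b‖ ^ p) (x x' v : F) :
    ⟪G x - G x', v⟫ - L / (1 + p) * ‖v‖ ^ (1 + p) ≤ f x' - f x - ⟪G x, x' - x⟫ := by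
  have hconvex := hconv.add_inner_gradient_le hf x (x' + v)
  have hdescent := sub_sub_inner_gradient_le_of_holder hp0 hf hHolder x' v
  have hsplit : ⟪G x, x' + v - x⟫ = ⟪G x, v⟫ + ⟪G x, x' - x⟫ := by
    rw [← inner_add_right]
    congr 1
    abel
  rw [inner_sub_left]
  linarith

end Gradient

lemma norm_sq_div_le_of_forall_inner_sub_le {E : Type*} [NormedAddCommGroup E]
    [InnerProductSpace ℝ E] {s : E} {Λ C : ℝ} (hΛ : 0 < Λ)
    (h : ∀ v, ⟪s, v⟫ - Λ / 2 * ‖v‖ ^ 2 ≤ C) :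
    1 / (2 * Λ) * ‖s‖ ^ 2 ≤ C := by
  convert h (Λ⁻¹ • s) using 1
  rw [real_inner_smul_right, real_inner_self_eq_norm_sq, norm_smul,
    Real.norm_of_nonneg (by positivity)]
  field_simp
  ring

/-- With `κ = m/δ` and `A = (λ⋆_j + r) L_j` this is the `j`-th summand of `L_{δ,r}`. -/
noncomputable def holderYoungCoeff (p κ A : ℝ) : ℝ :=
  ((1 - p) / (1 + p) * κ) ^ ((1 - p) / (1 + p)) * A ^ (2 / (1 + p))

lemma holderYoungCoeff_rpow_mul_rpow {p κ A : ℝ} (hp1 : p < 1) (h1p : 0 < 1 + p) (hκ : 0 < κ)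
    (hA : 0 < A) :
    (holderYoungCoeff p κ A / (1 + p)) ^ ((1 + p) / 2) * (1 / ((1 - p) * κ)) ^ ((1 - p) / 2) =
      A / (1 + p) := by
  have hu : 0 < 1 - p := by linarith
  have hb : 0 < (1 - p) / (1 + p) * κ := by positivity
  have hM : 0 < holderYoungCoeff p κ A :=
    mul_pos (Real.rpow_pos_of_pos hb _) (Real.rpow_pos_of_pos hA _)
  apply Real.log_injOn_pos (Set.mem_Ioi.2 (by positivity)) (Set.mem_Ioi.2 (by positivity))
  rw [Real.log_mul (by positivity) (by positivity), Real.log_rpow (by positivity),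
    Real.log_rpow (by positivity), Real.log_div hM.ne' h1p.ne', holderYoungCoeff,
    Real.log_mul (by positivity) (by positivity), Real.log_rpow hb, Real.log_rpow hA,
    Real.log_mul (by positivity) hκ.ne', Real.log_div hu.ne' h1p.ne', one_div, Real.log_inv,
    Real.log_mul hu.ne' hκ.ne', Real.log_div hA.ne' h1p.ne']
  field_simp
  ring

lemma div_mul_rpow_le_holderYoungCoeff {p κ A t : ℝ} (hA : 0 ≤ A) (h1p : 0 < 1 + p)
    (hp1 : p ≤ 1) (hκ : 0 < κ) (ht : 0 ≤ t) :
    A / (1 + p) * t ^ (1 + p) ≤ holderYoungCoeff p κ A / 2 * t ^ 2 + 1 / (2 * κ) := by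
  obtain rfl | hp1 := hp1.eq_or_lt
  · norm_num [holderYoungCoeff]
    positivity
  obtain rfl | hA := hA.eq_or_lt
  · rw [holderYoungCoeff, Real.zero_rpow (by positivity)]
    simp only [zero_div, zero_mul, mul_zero, zero_add]
    positivity
  have hu : 0 < 1 - p := by linarith
  set M := holderYoungCoeff p κ A
  have hM : 0 < M := mul_pos (Real.rpow_pos_of_pos (by positivity) _) (Real.rpow_pos_of_pos hA _)
  have hamgm := Real.geom_mean_le_arith_mean2_weighted (w₁ := (1 + p) / 2) (w₂ := (1 - p) / 2)
    (p₁ := M / (1 + p) * t ^ 2) (p₂ := 1 / ((1 - p) * κ))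
    (by positivity) (by positivity) (by positivity) (by positivity) (by ring)
  have hsplit :
      (M / (1 + p) * t ^ 2) ^ ((1 + p) / 2) = (M / (1 + p)) ^ ((1 + p) / 2) * t ^ (1 + p) := by
    rw [Real.mul_rpow (by positivity) (sq_nonneg t), ← Real.rpow_natCast t 2,
      ← Real.rpow_mul ht]
    congr 2
    push_cast
    ring
  calc A / (1 + p) * t ^ (1 + p)
      = (M / (1 + p) * t ^ 2) ^ ((1 + p) / 2) * (1 / ((1 - p) * κ)) ^ ((1 - p) / 2) := by
        rw [hsplit, mul_right_comm, holderYoungCoeff_rpow_mul_rpow hp1 h1p hκ hA]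
    _ ≤ (1 + p) / 2 * (M / (1 + p) * t ^ 2) + (1 - p) / 2 * (1 / ((1 - p) * κ)) := hamgm
    _ = M / 2 * t ^ 2 + 1 / (2 * κ) := by field_simp

lemma sum_div_mul_rpow_le_sum_holderYoungCoeff {ι : Type*} [Fintype ι] {A A' p : ι → ℝ}
    (hA : ∀ j, 0 ≤ A j) (hAA' : ∀ j, A j ≤ A' j) (h1p : ∀ j, 0 < 1 + p j)
    (hp1 : ∀ j, p j ≤ 1) {δ t : ℝ} (hδ : 0 < δ) (ht : 0 ≤ t) :
    ∑ j, A j / (1 + p j) * t ^ (1 + p j) ≤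
      (∑ j, holderYoungCoeff (p j) (Fintype.card ι / δ) (A' j)) / 2 * t ^ 2 + δ / 2 := by
  rcases isEmpty_or_nonempty ι with hι | hι
  · simp only [Finset.univ_eq_empty, Finset.sum_empty]
    linarith
  have hκ : 0 < (Fintype.card ι : ℝ) / δ := by positivity
  calc ∑ j, A j / (1 + p j) * t ^ (1 + p j)
      ≤ ∑ j, (holderYoungCoeff (p j) (Fintype.card ι / δ) (A' j) / 2 * t ^ 2
          + 1 / (2 * (Fintype.card ι / δ))) := by
        refine Finset.sum_le_sum fun j _ => ?_
        refine (div_mul_rpow_le_holderYoungCoeff (hA j) (h1p j) (hp1 j) hκ ht).trans ?_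
        have h1pj := h1p j
        unfold holderYoungCoeff
        gcongr
        · exact Real.rpow_nonneg (mul_nonneg (div_nonneg (by linarith [hp1 j]) h1pj.le) hκ.le) _
        · exact hA j
        · exact hAA' j
    _ = _ := by
        rw [Finset.sum_add_distrib, ← Finset.sum_mul, ← Finset.sum_div, Finset.sum_const,
          Finset.card_univ, nsmul_eq_mul]
        field_simp

theorem stmt5_general {n m : ℕ} (g : Fin m → EuclideanSpace ℝ (Fin n) → ℝ)
    (g' : Fin m → EuclideanSpace ℝ (Fin n) → EuclideanSpace ℝ (Fin n))
    (L p : Fin m → ℝ) (hL : ∀ j, 0 ≤ L j) (hp0 : ∀ j, 0 ≤ p j) (hp1 : ∀ j, p j ≤ 1)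
    (hconv : ∀ j, ConvexOn ℝ Set.univ (g j))
    (hgrad : ∀ j x, HasGradientAt (g j) (g' j x) x)
    (hHolder : ∀ j x y, ‖g' j x - g' j y‖ ≤ L j * ‖x - y‖ ^ p j)
    (lamS : Fin m → ℝ) (r δ : ℝ) (hδ : 0 < δ)
    (hpos : 0 < ∑ j, ((1 - p j) / (1 + p j) * ((m : ℝ) / δ)) ^ ((1 - p j) / (1 + p j)) *
      ((lamS j + r) * L j) ^ (2 / (1 + p j)))
    (lam : Fin m → ℝ) (hlam0 : ∀ j, 0 ≤ lam j) (hlamub : ∀ j, lam j ≤ lamS j + r)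
    (x xhat : EuclideanSpace ℝ (Fin n)) :
    1 / (2 * ∑ j, ((1 - p j) / (1 + p j) * ((m : ℝ) / δ)) ^ ((1 - p j) / (1 + p j)) *
        ((lamS j + r) * L j) ^ (2 / (1 + p j))) *
        ‖∑ j, lam j • (g' j x - g' j xhat)‖ ^ 2 - δ / 2
      ≤ ∑ j, lam j * (g j xhat - g j x - ⟪g' j x, xhat - x⟫) := by
  set Λ := ∑ j, holderYoungCoeff (p j) (m / δ) ((lamS j + r) * L j)
  suffices h : ∀ v, ⟪∑ j, lam j • (g' j x - g' j xhat), v⟫ - Λ / 2 * ‖v‖ ^ 2 ≤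
      ∑ j, lam j * (g j xhat - g j x - ⟪g' j x, xhat - x⟫) + δ / 2 by
    linarith [norm_sq_div_le_of_forall_inner_sub_le hpos h]
  intro v
  have hbregman :
      ∑ j, lam j * (⟪g' j x - g' j xhat, v⟫ - L j / (1 + p j) * ‖v‖ ^ (1 + p j)) ≤
        ∑ j, lam j * (g j xhat - g j x - ⟪g' j x, xhat - x⟫) :=
    Finset.sum_le_sum fun j _ => mul_le_mul_of_nonneg_left
      (inner_sub_holder_le_bregman (hconv j) (hp0 j) (hgrad j) (hHolder j) x xhat v) (hlam0 j)
  have hyoung := sum_div_mul_rpow_le_sum_holderYoungCoeff (A := fun j => lam j * L j)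
    (A' := fun j => (lamS j + r) * L j)
    (fun j => mul_nonneg (hlam0 j) (hL j)) (fun j => mul_le_mul_of_nonneg_right (hlamub j) (hL j))
    (fun j => by linarith [hp0 j]) hp1 hδ (norm_nonneg v)
  rw [Fintype.card_fin] at hyoung
  have hsplit :
      ∑ j, lam j * (⟪g' j x - g' j xhat, v⟫ - L j / (1 + p j) * ‖v‖ ^ (1 + p j)) =
        ⟪∑ j, lam j • (g' j x - g' j xhat), v⟫ -
          ∑ j, lam j * L j / (1 + p j) * ‖v‖ ^ (1 + p j) := by
    rw [sum_inner, ← Finset.sum_sub_distrib]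
    refine Finset.sum_congr rfl fun j _ => ?_
    rw [real_inner_smul_left]
    ring
  linarith

/-- Aggregate smoothness bound (Hölder case): for convex `(L_j, p_j)`-Hölder smooth components,
nonnegative multipliers `λ⋆`, radius `r ≥ 0`, tolerance `δ > 0`, and
`L_{δ,r} = Σ_j [((1−p_j)/(1+p_j))·(m/δ)]^{(1−p_j)/(1+p_j)} [(λ⋆_j + r) L_j]^{2/(1+p_j)} > 0`
(the bracketed factor being `1` when `p_j = 1`, as `Real.rpow` gives `0^0 = 1`),
every `λ` with `0 ≤ λ_j ≤ λ⋆_j + r` satisfies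
`Σ_j λ_j U_{g_j}(x̂; x) ≥ (1/(2L_{δ,r})) ‖Σ_j λ_j (∇g_j(x) − ∇g_j(x̂))‖² − δ/2`. -/
theorem stmt5 {n m : ℕ} (g : Fin m → EuclideanSpace ℝ (Fin n) → ℝ)
    (g' : Fin m → EuclideanSpace ℝ (Fin n) → EuclideanSpace ℝ (Fin n))
    (L p : Fin m → ℝ) (hL : ∀ j, 0 ≤ L j) (hp0 : ∀ j, 0 ≤ p j) (hp1 : ∀ j, p j ≤ 1)
    (hconv : ∀ j, ConvexOn ℝ Set.univ (g j))
    (hgrad : ∀ j x, HasGradientAt (g j) (g' j x) x)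
    (hHolder : ∀ j x y, ‖g' j x - g' j y‖ ≤ L j * ‖x - y‖ ^ p j)
    (lamS : Fin m → ℝ) (hlamS : ∀ j, 0 ≤ lamS j) (r δ : ℝ) (hr : 0 ≤ r) (hδ : 0 < δ)
    (hpos : 0 < ∑ j, ((1 - p j) / (1 + p j) * ((m : ℝ) / δ)) ^ ((1 - p j) / (1 + p j)) *
      ((lamS j + r) * L j) ^ (2 / (1 + p j)))
    (lam : Fin m → ℝ) (hlam0 : ∀ j, 0 ≤ lam j) (hlamub : ∀ j, lam j ≤ lamS j + r)
    (x xhat : EuclideanSpace ℝ (Fin n)) :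
    1 / (2 * ∑ j, ((1 - p j) / (1 + p j) * ((m : ℝ) / δ)) ^ ((1 - p j) / (1 + p j)) *
        ((lamS j + r) * L j) ^ (2 / (1 + p j))) *
        ‖∑ j, lam j • (g' j x - g' j xhat)‖ ^ 2 - δ / 2
      ≤ ∑ j, lam j * (g j xhat - g j x - ⟪g' j x, xhat - x⟫) :=
  stmt5_general g g' L p hL hp0 hp1 hconv hgrad hHolder lamS r δ hδ hpos lam hlam0 hlamub x xhat
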